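/- arXiv:1311.5759 — 4 statements merged into one kernel-verified Lean document; each statement's English description precedes it below -/
import Mathlib

section
/- Let K be a number field and p(t) = t⁴ + at³ + bt² + ct + d a separable polynomial in K[t]. Let β ∈ K be a root of the cubic resolvent r(t) = t³ − bt² + (ac − 4d)t − a²d + 4bd − c², and set Δ₁ = β² − 4d and Δ₂ = 4β + a² − 4b. If Δ₂ ≠ 0, then p(t) factors as a product of two monic quadratic polynomials with coefficients in K(√Δ₂); if Δ₂ = 0, then p(t) factors as a product of two monic quadratic polynomials with coefficients in K(√Δ₁). -/
/-!
Look for `p = (t² + ut + v)(t² + u't + v')` with `u = (a + x)/2`, `u' = (a - x)/2`,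
`v = (β - y)/2`, `v' = (β + y)/2`. Comparing coefficients, this works as soon as
`x² = Δ₂`, `y² = Δ₁` and `xy = 2c − aβ`, and the resolvent equation for `β` says precisely
`(2c − aβ)² = Δ₁Δ₂`. So if `Δ₂ ≠ 0` take `x = √Δ₂`, `y = (2c − aβ)/√Δ₂`; if `Δ₂ = 0` then
`2c = aβ`, and `x = 0`, `y = √Δ₁` will do.
-/

open Polynomial IntermediateField
open scoped Classical

section CommRing

variable {R : Type*} [CommRing R] [Nontrivial R]

theorem exists_isMonicOfDegree_two_factors_of_coeffs {a b c d u v u' v' : R}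
    (ha : a = u + u') (hb : b = v + v' + u * u') (hc : c = u * v' + u' * v) (hd : d = v * v') :
    ∃ q₁ q₂ : R[X], IsMonicOfDegree q₁ 2 ∧ IsMonicOfDegree q₂ 2 ∧
      X ^ 4 + C a * X ^ 3 + C b * X ^ 2 + C c * X + C d = q₁ * q₂ := by
  refine ⟨X ^ 2 + C u * X + C v, X ^ 2 + C u' * X + C v',
    isMonicOfDegree_add_add_two u v, isMonicOfDegree_add_add_two u' v', ?_⟩
  subst ha hb hc hd
  simp only [map_add, map_mul]
  ring

theorem Polynomial.IsMonicOfDegree.degree_eq {p : R[X]} {n : ℕ} (hp : IsMonicOfDegree p n) :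
    p.degree = n := by
  rw [degree_eq_natDegree hp.ne_zero, hp.natDegree_eq]

end CommRing

theorem sq_sub_eq_disc_mul_disc_of_resolvent_root {R : Type*} [CommRing R] {a b c d β : R}
    (hβ : β ^ 3 - b * β ^ 2 + (a * c - 4 * d) * β - a ^ 2 * d + 4 * b * d - c ^ 2 = 0) :
    (2 * c - a * β) ^ 2 = (β ^ 2 - 4 * d) * (4 * β + a ^ 2 - 4 * b) := by
  linear_combination (-4 : R) * hβ

section Field

variable {F : Type*} [Field F] {a b c d β : F}

theorem exists_quadratic_factors_of_sq_eq_disc (h2 : (2 : F) ≠ 0) {x y : F}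
    (hx : x ^ 2 = 4 * β + a ^ 2 - 4 * b) (hy : y ^ 2 = β ^ 2 - 4 * d)
    (hxy : x * y = 2 * c - a * β) :
    ∃ q₁ q₂ : F[X], IsMonicOfDegree q₁ 2 ∧ IsMonicOfDegree q₂ 2 ∧
      X ^ 4 + C a * X ^ 3 + C b * X ^ 2 + C c * X + C d = q₁ * q₂ :=
  exists_isMonicOfDegree_two_factors_of_coeffs (u := (a + x) / 2) (v := (β - y) / 2)
    (u' := (a - x) / 2) (v' := (β + y) / 2)
    (by field_simp; ring) (by field_simp; linear_combination hx)
    (by field_simp; linear_combination -2 * hxy) (by field_simp; linear_combination hy)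

theorem exists_quadratic_factors_of_resolvent_root [DecidableEq F] (h2 : (2 : F) ≠ 0)
    (hβ : β ^ 3 - b * β ^ 2 + (a * c - 4 * d) * β - a ^ 2 * d + 4 * b * d - c ^ 2 = 0)
    {S : F} (hS : S ^ 2 = if 4 * β + a ^ 2 - 4 * b = 0 then β ^ 2 - 4 * d
      else 4 * β + a ^ 2 - 4 * b) :
    ∃ q₁ q₂ : F[X], IsMonicOfDegree q₁ 2 ∧ IsMonicOfDegree q₂ 2 ∧
      X ^ 4 + C a * X ^ 3 + C b * X ^ 2 + C c * X + C d = q₁ * q₂ := by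
  have key := sq_sub_eq_disc_mul_disc_of_resolvent_root hβ
  split_ifs at hS with hΔ₂
  · have hc : 2 * c - a * β = 0 := pow_eq_zero_iff two_ne_zero |>.mp (by rw [key, hΔ₂, mul_zero])
    exact exists_quadratic_factors_of_sq_eq_disc h2 (x := 0) (y := S)
      (by rw [hΔ₂]; ring) hS (by rw [hc]; ring)
  · have hS0 : S ≠ 0 := by rintro rfl; exact hΔ₂ (by rw [← hS]; ring)
    refine exists_quadratic_factors_of_sq_eq_disc h2 (x := S) (y := (2 * c - a * β) / S) hS ?_ ?_
    · rw [div_pow, key, ← hS]; field_simp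
    · field_simp

end Field

theorem quartic_factors_over_quadratic_extension_general (K : Type*) [Field K] [NumberField K]
    (a b c d β : K)
    (hβ : β ^ 3 - b * β ^ 2 + (a * c - 4 * d) * β - a ^ 2 * d + 4 * b * d - c ^ 2 = 0)
    (s : AlgebraicClosure K)
    (hs : s ^ 2 = algebraMap K (AlgebraicClosure K)
      (if 4 * β + a ^ 2 - 4 * b = 0 then β ^ 2 - 4 * d else 4 * β + a ^ 2 - 4 * b)) :
    ∃ q₁ q₂ : Polynomial K⟮s⟯, q₁.Monic ∧ q₂.Monic ∧ q₁.degree = 2 ∧ q₂.degree = 2 ∧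
      (X ^ 4 + C a * X ^ 3 + C b * X ^ 2 + C c * X + C d : K[X]).map
        (algebraMap K K⟮s⟯) = q₁ * q₂ := by
  set f := algebraMap K K⟮s⟯
  have hS : AdjoinSimple.gen K s ^ 2 = f (if 4 * β + a ^ 2 - 4 * b = 0 then β ^ 2 - 4 * d
      else 4 * β + a ^ 2 - 4 * b) := by
    apply (algebraMap K⟮s⟯ (AlgebraicClosure K)).injective
    rw [map_pow, AdjoinSimple.algebraMap_gen, hs, IsScalarTower.algebraMap_apply K K⟮s⟯]
  have hS' : AdjoinSimple.gen K s ^ 2 =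
      if 4 * f β + f a ^ 2 - 4 * f b = 0 then f β ^ 2 - 4 * f d
      else 4 * f β + f a ^ 2 - 4 * f b := by
    rw [hS, apply_ite f]
    congr 1
    · rw [← map_eq_zero f]
      simp [map_ofNat]
    all_goals simp [map_ofNat]
  obtain ⟨q₁, q₂, h₁, h₂, hq⟩ := exists_quadratic_factors_of_resolvent_root two_ne_zero
    (by simpa [map_ofNat] using congrArg f hβ) hS'
  refine ⟨q₁, q₂, h₁.monic, h₂.monic, h₁.degree_eq, h₂.degree_eq, ?_⟩
  simpa using hq

/-- Let `p(t) = t⁴ + at³ + bt² + ct + d` be separable over a number field `K`, let `β ∈ K`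
be a root of the cubic resolvent `r(t) = t³ − bt² + (ac − 4d)t − a²d + 4bd − c²`, and set
`Δ₁ = β² − 4d`, `Δ₂ = 4β + a² − 4b`. If `Δ₂ ≠ 0` then `p` factors as a product of two
monic quadratics over `K(√Δ₂)`; if `Δ₂ = 0` then it does so over `K(√Δ₁)`. -/
theorem quartic_factors_over_quadratic_extension (K : Type*) [Field K] [NumberField K]
    (a b c d β : K)
    (hsep : (X ^ 4 + C a * X ^ 3 + C b * X ^ 2 + C c * X + C d : K[X]).Separable)
    (hβ : β ^ 3 - b * β ^ 2 + (a * c - 4 * d) * β - a ^ 2 * d + 4 * b * d - c ^ 2 = 0)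
    (s : AlgebraicClosure K)
    (hs : s ^ 2 = algebraMap K (AlgebraicClosure K)
      (if 4 * β + a ^ 2 - 4 * b = 0 then β ^ 2 - 4 * d else 4 * β + a ^ 2 - 4 * b)) :
    ∃ q₁ q₂ : Polynomial K⟮s⟯, q₁.Monic ∧ q₂.Monic ∧ q₁.degree = 2 ∧ q₂.degree = 2 ∧
      (X ^ 4 + C a * X ^ 3 + C b * X ^ 2 + C c * X + C d : K[X]).map
        (algebraMap K K⟮s⟯) = q₁ * q₂ :=
  quartic_factors_over_quadratic_extension_general K a b c d β hβ s hs
end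

section
/- Let K be a field and a, b, c, d, x₀, x₁, x₂, x₃ ∈ K with ax₀² + bx₁² = x₂² and cx₀² + dx₁² = x₃². Define the polynomials X₀(t) = x₀t² − 2bx₁x₃²t − abx₀x₃⁴, X₁(t) = −x₁t² − 2ax₀x₃²t + abx₁x₃⁴, X₂(t) = x₂(t² + abx₃⁴), and p(t) = t⁴ + 4(ad − bc)x₀x₁t³ + 2(2(a²dx₀² + b²cx₁²) − abx₃²)x₃²t² − 4ab(ad − bc)x₀x₁x₃⁴t + a²b²x₃⁸. Then the polynomial identities a·X₀(t)² + b·X₁(t)² = X₂(t)² and c·X₀(t)² + d·X₁(t)² = x₃²·p(t) hold in K[t]. -/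
open Polynomial

/-- Parametrizing the conic `aX₀² + bX₁² = X₂²` by a point `[x₀ : x₁ : x₂ : x₃]` of the
diagonal genus 1 curve `{aX₀² + bX₁² = X₂², cX₀² + dX₁² = X₃²}` yields the quartic model
`x₃²·p(t)`: the stated polynomial identities hold in `K[t]`. -/
theorem conic_parametrization_identities (K : Type*) [Field K]
    (a b c d x₀ x₁ x₂ x₃ : K)
    (h₁ : a * x₀ ^ 2 + b * x₁ ^ 2 = x₂ ^ 2) (h₂ : c * x₀ ^ 2 + d * x₁ ^ 2 = x₃ ^ 2)
    (X₀ X₁ X₂ p : Polynomial K)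
    (hX₀ : X₀ = C x₀ * X ^ 2 - C (2 * b * x₁ * x₃ ^ 2) * X - C (a * b * x₀ * x₃ ^ 4))
    (hX₁ : X₁ = - C x₁ * X ^ 2 - C (2 * a * x₀ * x₃ ^ 2) * X + C (a * b * x₁ * x₃ ^ 4))
    (hX₂ : X₂ = C x₂ * (X ^ 2 + C (a * b * x₃ ^ 4)))
    (hp : p = X ^ 4 + C (4 * (a * d - b * c) * x₀ * x₁) * X ^ 3
      + C (2 * (2 * (a ^ 2 * d * x₀ ^ 2 + b ^ 2 * c * x₁ ^ 2) - a * b * x₃ ^ 2) * x₃ ^ 2)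
        * X ^ 2
      - C (4 * a * b * (a * d - b * c) * x₀ * x₁ * x₃ ^ 4) * X
      + C (a ^ 2 * b ^ 2 * x₃ ^ 8)) :
    C a * X₀ ^ 2 + C b * X₁ ^ 2 = X₂ ^ 2 ∧
    C c * X₀ ^ 2 + C d * X₁ ^ 2 = C (x₃ ^ 2) * p := by
  have h₁' : C a * C x₀ ^ 2 + C b * C x₁ ^ 2 = (C x₂ : Polynomial K) ^ 2 := by
    have := congrArg (C : K → Polynomial K) h₁
    simpa [map_add, map_mul, map_pow] using this
  have h₂' : C c * C x₀ ^ 2 + C d * C x₁ ^ 2 = (C x₃ : Polynomial K) ^ 2 := by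
    have := congrArg (C : K → Polynomial K) h₂
    simpa [map_add, map_mul, map_pow] using this
  subst hX₀ hX₁ hX₂ hp
  constructor
  · linear_combination (norm := (simp only [map_mul, map_add, map_sub, map_pow, map_ofNat]; ring))
      (X ^ 2 + C a * C b * C x₃ ^ 4) ^ 2 * h₁'
  · linear_combination (norm := (simp only [map_mul, map_add, map_sub, map_pow, map_ofNat]; ring))
      (X ^ 2 - C a * C b * C x₃ ^ 4) ^ 2 * h₂'
end

section
/- Let K be a field and a, b, c, d, x₀, x₁, x₂, x₃, α ∈ K with ax₀² + bx₁² = x₂², cx₀² + dx₁² = x₃², and α² = −cd. Define p(t) = t⁴ + 4(ad − bc)x₀x₁t³ + 2(2(a²dx₀² + b²cx₁²) − abx₃²)x₃²t² − 4ab(ad − bc)x₀x₁x₃⁴t + a²b²x₃⁸, p₊(t) = t² + 2((ad − bc)x₀x₁ − x₂²α)t − abx₃⁴, and p₋(t) = t² + 2((ad − bc)x₀x₁ + x₂²α)t − abx₃⁴. Then p(t) = p₊(t)·p₋(t) in K[t]. -/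
open Polynomial

/-- The quartic model `p(t)` of the diagonal genus 1 curve factors over `K(α)`, `α² = −cd`,
as `p = p₊ · p₋`, where `p₊, p₋` are the stated monic quadratics. -/
theorem quartic_model_factorization (K : Type*) [Field K]
    (a b c d x₀ x₁ x₂ x₃ α : K)
    (h₁ : a * x₀ ^ 2 + b * x₁ ^ 2 = x₂ ^ 2) (h₂ : c * x₀ ^ 2 + d * x₁ ^ 2 = x₃ ^ 2)
    (hα : α ^ 2 = -(c * d))
    (p pPlus pMinus : Polynomial K)
    (hp : p = X ^ 4 + C (4 * (a * d - b * c) * x₀ * x₁) * X ^ 3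
      + C (2 * (2 * (a ^ 2 * d * x₀ ^ 2 + b ^ 2 * c * x₁ ^ 2) - a * b * x₃ ^ 2) * x₃ ^ 2)
        * X ^ 2
      - C (4 * a * b * (a * d - b * c) * x₀ * x₁ * x₃ ^ 4) * X
      + C (a ^ 2 * b ^ 2 * x₃ ^ 8))
    (hplus : pPlus = X ^ 2 + C (2 * ((a * d - b * c) * x₀ * x₁ - x₂ ^ 2 * α)) * X
      - C (a * b * x₃ ^ 4))
    (hminus : pMinus = X ^ 2 + C (2 * ((a * d - b * c) * x₀ * x₁ + x₂ ^ 2 * α)) * X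
      - C (a * b * x₃ ^ 4)) :
    p = pPlus * pMinus := by
  have key : 2 * (2 * (a ^ 2 * d * x₀ ^ 2 + b ^ 2 * c * x₁ ^ 2) - a * b * x₃ ^ 2) * x₃ ^ 2
      = 4 * ((a * d - b * c) * x₀ * x₁) ^ 2 - 4 * x₂ ^ 4 * α ^ 2 - 2 * (a * b * x₃ ^ 4) := by
    linear_combination (4 * x₂ ^ 4) * hα
      + (4 * c * d * (a * x₀ ^ 2 + b * x₁ ^ 2 + x₂ ^ 2)) * h₁
      + (-4 * (a ^ 2 * d * x₀ ^ 2 + b ^ 2 * c * x₁ ^ 2)) * h₂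
  subst hp hplus hminus
  rw [key]
  simp only [map_sub, map_add, map_mul, map_pow, map_neg, map_ofNat]
  ring
end

section
/- Let K be a field and α₁, α₂, α₃, α₄ ∈ K. Set a = −(α₁ + α₂ + α₃ + α₄), b = Σ_{i<j} αᵢαⱼ, c = −Σ_{i<j<k} αᵢαⱼαₖ, and d = α₁α₂α₃α₄, so that t⁴ + at³ + bt² + ct + d = (t − α₁)(t − α₂)(t − α₃)(t − α₄). Then for each index i ∈ {1, 2, 3, 4}, the point (x, y) with x = αᵢ·(αᵢ − Σ_{j ≠ i} αⱼ) and y = Π_{j ≠ i}(αᵢ − αⱼ) satisfies the equation y² = x³ + bx² + (ac − 4d)x + a²d − 4bd + c². -/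
/-- For a monic quartic `t⁴ + at³ + bt² + ct + d = (t − α₁)(t − α₂)(t − α₃)(t − α₄)`, for
each index `i` the point `(αᵢ(αᵢ − Σ_{j≠i} αⱼ), Π_{j≠i}(αᵢ − αⱼ))` lies on the curve
`y² = x³ + bx² + (ac − 4d)x + a²d − 4bd + c²`. -/
theorem roots_map_to_resolvent_curve (K : Type*) [Field K] (α₁ α₂ α₃ α₄ a b c d : K)
    (ha : a = -(α₁ + α₂ + α₃ + α₄))
    (hb : b = α₁ * α₂ + α₁ * α₃ + α₁ * α₄ + α₂ * α₃ + α₂ * α₄ + α₃ * α₄)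
    (hc : c = -(α₁ * α₂ * α₃ + α₁ * α₂ * α₄ + α₁ * α₃ * α₄ + α₂ * α₃ * α₄))
    (hd : d = α₁ * α₂ * α₃ * α₄) :
    (((α₁ - α₂) * (α₁ - α₃) * (α₁ - α₄)) ^ 2 =
        (α₁ * (α₁ - (α₂ + α₃ + α₄))) ^ 3 + b * (α₁ * (α₁ - (α₂ + α₃ + α₄))) ^ 2 +
          (a * c - 4 * d) * (α₁ * (α₁ - (α₂ + α₃ + α₄))) + a ^ 2 * d - 4 * b * d + c ^ 2) ∧
    (((α₂ - α₁) * (α₂ - α₃) * (α₂ - α₄)) ^ 2 =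
        (α₂ * (α₂ - (α₁ + α₃ + α₄))) ^ 3 + b * (α₂ * (α₂ - (α₁ + α₃ + α₄))) ^ 2 +
          (a * c - 4 * d) * (α₂ * (α₂ - (α₁ + α₃ + α₄))) + a ^ 2 * d - 4 * b * d + c ^ 2) ∧
    (((α₃ - α₁) * (α₃ - α₂) * (α₃ - α₄)) ^ 2 =
        (α₃ * (α₃ - (α₁ + α₂ + α₄))) ^ 3 + b * (α₃ * (α₃ - (α₁ + α₂ + α₄))) ^ 2 +
          (a * c - 4 * d) * (α₃ * (α₃ - (α₁ + α₂ + α₄))) + a ^ 2 * d - 4 * b * d + c ^ 2) ∧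
    (((α₄ - α₁) * (α₄ - α₂) * (α₄ - α₃)) ^ 2 =
        (α₄ * (α₄ - (α₁ + α₂ + α₃))) ^ 3 + b * (α₄ * (α₄ - (α₁ + α₂ + α₃))) ^ 2 +
          (a * c - 4 * d) * (α₄ * (α₄ - (α₁ + α₂ + α₃))) + a ^ 2 * d - 4 * b * d + c ^ 2) := by
  subst ha hb hc hd
  refine ⟨by ring, by ring, by ring, by ring⟩
end
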